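/- In a complete Heyting algebra, for every element a, the infimum over all t of t^(t^a) equals a, i.e. ⨅_{t} (t^a ⇨ t) = a. -/
import Mathlib

/-- In a complete Heyting algebra, `⨅ t, t^(t^a) = a`, where `z^y = y ⇨ z`. -/
theorem heyting_iInf_exp_exp {α : Type*} [Order.Frame α] (a : α) :
    ⨅ t : α, (a ⇨ t) ⇨ t = a := by
  apply le_antisymm
  · calc ⨅ t : α, (a ⇨ t) ⇨ t ≤ (a ⇨ a) ⇨ a := iInf_le _ a
    _ = a := by simp
  · exact le_iInf fun t => le_himp_iff.2 (by rw [inf_comm]; exact himp_inf_le)
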